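/- If A is Hurwitz (all eigenvalues have negative real part) and ‖A_d‖ < 1/(sup_{ω∈ℝ} ‖(iωI − A)⁻¹‖), then the delayed system ẋ(t) = Ax(t) + A_d x(t−τ) is stable for all delays τ ≥ 0 (delay-independent stability): the quasipolynomial det(sI − A − A_d e^{−sτ}) has no zeros with Re s ≥ 0. -/

import Mathlib

/-!
Since `A` is Hurwitz, the resolvent `R(z) = (zI - A)⁻¹` is holomorphic on the closed right
half-plane and tends to `0` at infinity, so by Phragmén–Lindelöf its norm there is bounded by its
supremum `K` on the imaginary axis. For `Re s ≥ 0` and `τ ≥ 0` we have `|e^{-sτ}| ≤ 1`, and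
`sI - A - e^{-sτ} A_d = (sI - A)(I - e^{-sτ} R(s) A_d)` with `‖e^{-sτ} R(s) A_d‖ ≤ K ‖A_d‖ < 1`,
so both factors are invertible.
-/

open Matrix Complex Filter Topology

theorem map_ringInverse {F A B : Type*} [Semiring A] [Semiring B] [EquivLike F A B]
    [RingEquivClass F A B] (f : F) (x : A) : f (Ring.inverse x) = Ring.inverse (f x) := by
  by_cases hx : IsUnit x
  · rw [← one_mul (Ring.inverse (f x)), Ring.eq_mul_inverse_iff_mul_eq _ _ _ (hx.map f),
      ← map_mul, Ring.inverse_mul_cancel _ hx, map_one]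
  · have hfx : ¬IsUnit (f x) := by rwa [MulEquiv.isUnit_map]
    rw [Ring.inverse_non_unit _ hx, Ring.inverse_non_unit _ hfx, map_zero]

theorem mem_resolventSet_map_iff {F R A B : Type*} [CommSemiring R] [Ring A] [Ring B]
    [Algebra R A] [Algebra R B] [EquivLike F A B] [AlgEquivClass F R A B] (f : F) {a : A} {r : R} :
    r ∈ resolventSet R (f a) ↔ r ∈ resolventSet R a := by
  rw [spectrum.mem_resolventSet_iff, spectrum.mem_resolventSet_iff, ← spectrum.notMem_iff,
    ← spectrum.notMem_iff, AlgEquiv.spectrum_eq]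

theorem mem_resolventSet_add_of_norm_resolvent_mul_lt_one {R A : Type*} [CommSemiring R]
    [NormedRing A] [HasSummableGeomSeries A] [Algebra R A] {a b : A} {r : R}
    (hr : r ∈ resolventSet R a) (hb : ‖resolvent a r‖ * ‖b‖ < 1) :
    r ∈ resolventSet R (a + b) := by
  have hfactor : algebraMap R A r - (a + b) =
      (algebraMap R A r - a) * (1 - resolvent a r * b) := by
    rw [mul_sub, mul_one, ← mul_assoc, resolvent, Ring.mul_inverse_cancel _ hr, one_mul,
      sub_add_eq_sub_sub]
  rw [spectrum.mem_resolventSet_iff, hfactor]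
  exact hr.mul (Units.oneSub _ ((norm_mul_le _ _).trans_lt hb)).isUnit

theorem norm_exp_neg_mul_ofReal_le_one {s : ℂ} {τ : ℝ} (hs : 0 ≤ s.re) (hτ : 0 ≤ τ) :
    ‖exp (-(s * τ))‖ ≤ 1 := by
  rw [norm_exp, Real.exp_le_one_iff, neg_re, re_mul_ofReal, neg_nonpos]
  exact mul_nonneg hs hτ

namespace Matrix

variable {n : Type*} [Fintype n] [DecidableEq n]

theorem det_smul_one_sub_ne_zero_iff {K : Type*} [Field K] (M : Matrix n n K) (z : K) :
    (z • (1 : Matrix n n K) - M).det ≠ 0 ↔ z ∈ resolventSet K M := by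
  rw [spectrum.mem_resolventSet_iff, Algebra.algebraMap_eq_smul_one, isUnit_iff_isUnit_det,
    isUnit_iff_ne_zero]

theorem toEuclideanCLM_smul_one_sub_inv {𝕜 : Type*} [RCLike 𝕜] (M : Matrix n n 𝕜) (z : 𝕜) :
    toEuclideanCLM (𝕜 := 𝕜) ((z • (1 : Matrix n n 𝕜) - M)⁻¹) =
      resolvent (toEuclideanCLM (𝕜 := 𝕜) M) z := by
  rw [nonsing_inv_eq_ringInverse, map_ringInverse, resolvent, map_sub, map_smul, map_one,
    Algebra.algebraMap_eq_smul_one]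

end Matrix

section HalfPlane

variable {A : Type*} [NormedRing A] [NormedAlgebra ℂ A] [CompleteSpace A] {a : A}

theorem differentiableOn_resolvent : DifferentiableOn ℂ (resolvent a) (resolventSet ℂ a) :=
  fun _ hz => (spectrum.hasDerivAt_resolvent_const_left hz).differentiableAt.differentiableWithinAt

theorem bddAbove_range_norm_resolvent_I_mul (h : ∀ ω : ℝ, I * ω ∈ resolventSet ℂ a) :
    BddAbove (Set.range fun ω : ℝ => ‖resolvent a (I * ω)‖) := by
  have hI : Tendsto (fun ω : ℝ => I * ω) (cocompact ℝ) (Bornology.cobounded ℂ) := by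
    rw [← tendsto_norm_atTop_iff_cobounded]
    simpa only [norm_mul, norm_I, one_mul, norm_real] using tendsto_norm_cocompact_atTop (E := ℝ)
  let f : ZeroAtInftyContinuousMap ℝ A :=
    { toFun := fun ω => resolvent a (I * ω)
      continuous_toFun := differentiableOn_resolvent.continuousOn.comp_continuous (by fun_prop) h
      zero_at_infty' := (spectrum.resolvent_tendsto_cobounded a).comp hI }
  obtain ⟨C, hC⟩ := isBounded_iff_forall_norm_le.mp f.isBounded_range
  exact ⟨C, by rintro _ ⟨ω, rfl⟩; exact hC _ ⟨ω, rfl⟩⟩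

theorem norm_resolvent_le_of_forall_norm_resolvent_I_mul_le
    (h : ∀ z : ℂ, 0 ≤ z.re → z ∈ resolventSet ℂ a) {C : ℝ}
    (hC : ∀ ω : ℝ, ‖resolvent a (I * ω)‖ ≤ C) {z : ℂ} (hz : 0 ≤ z.re) :
    ‖resolvent a z‖ ≤ C := by
  have hdiff : DiffContOnCl ℂ (resolvent a) {w : ℂ | 0 < w.re} := by
    refine (differentiableOn_resolvent.mono fun w hw => h w ?_).diffContOnCl
    exact closure_lt_subset_le continuous_const continuous_re hw
  have hgrowth : ∃ c < (2 : ℝ), ∃ B, resolvent a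
      =O[Bornology.cobounded ℂ ⊓ 𝓟 {w : ℂ | 0 < w.re}] fun w => Real.exp (B * ‖w‖ ^ c) :=
    ⟨1, one_lt_two, 0, by
      simpa using ((spectrum.resolvent_tendsto_cobounded a).isBigO_one ℝ).mono inf_le_left⟩
  have hreal : Tendsto (fun x : ℝ => resolvent a x) atTop (𝓝 0) := by
    refine (spectrum.resolvent_tendsto_cobounded a).comp ?_
    rw [← tendsto_norm_atTop_iff_cobounded]
    simpa using tendsto_abs_atTop_atTop
  exact PhragmenLindelof.right_half_plane_of_tendsto_zero_on_real hdiff hgrowth hreal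
    (fun x => mul_comm (x : ℂ) I ▸ hC x) hz

theorem norm_resolvent_le_iSup_norm_resolvent_I_mul
    (h : ∀ z : ℂ, 0 ≤ z.re → z ∈ resolventSet ℂ a) {z : ℂ} (hz : 0 ≤ z.re) :
    ‖resolvent a z‖ ≤ ⨆ ω : ℝ, ‖resolvent a (I * ω)‖ :=
  norm_resolvent_le_of_forall_norm_resolvent_I_mul_le h
    (le_ciSup (bddAbove_range_norm_resolvent_I_mul fun ω => h _ (by simp))) hz

end HalfPlane

/-- Small-gain delay-independent stability: if `A` is Hurwitz and
`‖A_d‖ < 1 / sup_{ω∈ℝ} ‖(iωI − A)⁻¹‖`, then for every delay `τ ≥ 0` the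
quasipolynomial `det(sI − A − A_d e^{−sτ})` has no zero with `Re s ≥ 0`. -/
theorem stmt_18 {n : Type*} [Fintype n] [DecidableEq n]
    (A Ad : Matrix n n ℝ)
    (hHur : ∀ μ ∈ spectrum ℂ (A.map Complex.ofReal), μ.re < 0)
    (hsmall : ‖Matrix.toEuclideanCLM (𝕜 := ℂ) (Ad.map Complex.ofReal)‖ <
      1 / ⨆ ω : ℝ, ‖Matrix.toEuclideanCLM (𝕜 := ℂ)
        (((Complex.I * ω) • (1 : Matrix n n ℂ) - A.map Complex.ofReal)⁻¹)‖) :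
    ∀ τ : ℝ, 0 ≤ τ → ∀ s : ℂ, 0 ≤ s.re →
      (s • (1 : Matrix n n ℂ) -
        (A.map Complex.ofReal + Complex.exp (-(s * τ)) • Ad.map Complex.ofReal)).det ≠ 0 := by
  intro τ hτ s hs
  set T := toEuclideanCLM (𝕜 := ℂ) (A.map ofReal)
  simp only [toEuclideanCLM_smul_one_sub_inv] at hsmall
  have hρ : ∀ z : ℂ, 0 ≤ z.re → z ∈ resolventSet ℂ T := fun z hz => by
    rw [mem_resolventSet_map_iff, spectrum.mem_resolventSet_iff, ← spectrum.notMem_iff]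
    exact fun hzσ => (hHur z hzσ).not_ge hz
  have hK : 0 < ⨆ ω : ℝ, ‖resolvent T (I * ω)‖ :=
    one_div_pos.mp ((norm_nonneg _).trans_lt hsmall)
  have hgain : ‖resolvent T s‖ * ‖toEuclideanCLM (𝕜 := ℂ) (exp (-(s * τ)) • Ad.map ofReal)‖ < 1 :=
    calc _ ≤ (⨆ ω : ℝ, ‖resolvent T (I * ω)‖) * ‖toEuclideanCLM (𝕜 := ℂ) (Ad.map ofReal)‖ := by
          refine mul_le_mul (norm_resolvent_le_iSup_norm_resolvent_I_mul hρ hs) ?_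
            (norm_nonneg _) hK.le
          rw [map_smul]
          exact (ContinuousLinearMap.opNorm_smul_le _ _).trans
            (mul_le_of_le_one_left (norm_nonneg _) (norm_exp_neg_mul_ofReal_le_one hs hτ))
      _ < 1 := (lt_div_iff₀' hK).mp hsmall
  rw [det_smul_one_sub_ne_zero_iff, ← mem_resolventSet_map_iff (toEuclideanCLM (𝕜 := ℂ)), map_add]
  exact mem_resolventSet_add_of_norm_resolvent_mul_lt_one (hρ s hs) hgain
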